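/- Let τ > 0, let s₀ = σ₀ + iθ₀ with σ₀, θ₀ ∈ ℝ and θ₀ ≠ 0, and suppose the coefficients of Δ satisfy, with D = τ²θ₀² − sin²(τθ₀): a₁ = −2σ₀ − 2θ₀(τθ₀ − sin(τθ₀)cos(τθ₀))/D, a₀ = σ₀² + 2σ₀θ₀(τθ₀ − sin(τθ₀)cos(τθ₀))/D + θ₀²(τ²θ₀² + sin²(τθ₀))/D, α₁ = 2θ₀e^{σ₀τ}(τθ₀cos(τθ₀) − sin(τθ₀))/D, and α₀ = 2θ₀e^{σ₀τ}(σ₀(sin(τθ₀) − τθ₀cos(τθ₀)) − τθ₀²sin(τθ₀))/D. Then s₀ and conj(s₀) form a pair of strictly dominant roots of Δ: Δ(s₀) = Δ(conj(s₀)) = 0 and every s ∈ ℂ with s ∉ {s₀, conj(s₀)} and Δ(s) = 0 satisfies Re s < σ₀. -/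

import Mathlib

/-!
The substitution `z = τ (s - σ₀)` turns `τ² Δ(s)` into `Q(z) = P(z) + e^{-z} L(z)` with
`P(z) = z² + A z + B`, `L(z) = C z + E` real, for which `±iω` (`ω = τ θ₀`) are double roots and
`A² - C² - 2B = -2ω²`, `B² - E² = ω⁴`. The last two identities say
`|P(iy)|² - |L(iy)|² = (y² - ω²)²`, and since `P(-iy) = conj P(iy)` this gives
`Re (Q(iy) P(-iy)) ≥ (y² - ω²)² / 2`. Hence the entire function `G(z) = Q(z) P(-z) / (z² + ω²)²`
has `Re G ≥ 1/2` on the imaginary axis; it is bounded on the right half-plane, so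
Phragmén–Lindelöf applied to `e^{-G}` gives `Re G ≥ 1/2` on the closed right half-plane, where
therefore `Q` has no zeros besides `±iω`.
-/

open Complex ComplexConjugate

section DivSubSq

variable {𝕜 : Type*} [NontriviallyNormedField 𝕜] {f : 𝕜 → 𝕜} {a b : 𝕜}

/-- `f z / (z - a) ^ 2`, with the removable singularity filled in when `a` is a double zero
of `f`. -/
noncomputable def divSubSq (f : 𝕜 → 𝕜) (a : 𝕜) : 𝕜 → 𝕜 := dslope (dslope f a) a

theorem sub_sq_mul_divSubSq (h₀ : f a = 0) (h₁ : deriv f a = 0) (z : 𝕜) :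
    (z - a) ^ 2 * divSubSq f a z = f z := by
  have h₁' : dslope f a a = 0 := by rw [dslope_same, h₁]
  calc (z - a) ^ 2 * divSubSq f a z = (z - a) • (z - a) • dslope (dslope f a) a z := by
        simp only [divSubSq, smul_eq_mul]; ring
    _ = f z := by rw [sub_smul_dslope_of_zero h₁', sub_smul_dslope_of_zero h₀]

theorem differentiableAt_divSubSq_of_ne (hf : DifferentiableAt 𝕜 f b) (hab : b ≠ a) :
    DifferentiableAt 𝕜 (divSubSq f a) b :=
  (differentiableAt_dslope_of_ne hab).2 ((differentiableAt_dslope_of_ne hab).2 hf)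

theorem Differentiable.divSubSq {f : ℂ → ℂ} (hf : Differentiable ℂ f) (a : ℂ) :
    Differentiable ℂ (divSubSq f a) := by
  have hdslope {g : ℂ → ℂ} (hg : Differentiable ℂ g) : Differentiable ℂ (dslope g a) :=
    differentiableOn_univ.1 ((differentiableOn_dslope Filter.univ_mem).2 hg.differentiableOn)
  exact hdslope (hdslope hf)

theorem divSubSq_eq_zero_and_deriv_eq_zero (hf : DifferentiableAt 𝕜 f b)
    (ha₀ : f a = 0) (ha₁ : deriv f a = 0) (hb₀ : f b = 0) (hb₁ : deriv f b = 0) (hab : b ≠ a) :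
    divSubSq f a b = 0 ∧ deriv (divSubSq f a) b = 0 := by
  have hba : (b - a) ^ 2 ≠ 0 := pow_ne_zero 2 (sub_ne_zero.2 hab)
  have hf' : HasDerivAt f
      (2 * (b - a) * divSubSq f a b + (b - a) ^ 2 * deriv (divSubSq f a) b) b := by
    have := (((hasDerivAt_id b).sub_const a).pow 2).mul
      (differentiableAt_divSubSq_of_ne hf hab).hasDerivAt
    refine (this.congr_of_eventuallyEq
      (.of_forall fun z => (sub_sq_mul_divSubSq ha₀ ha₁ z).symm)).congr_deriv ?_
    simp
  have hk₀ : divSubSq f a b = 0 := by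
    simpa [hba] using (sub_sq_mul_divSubSq ha₀ ha₁ b).trans hb₀
  exact ⟨hk₀, by simpa [hk₀, hba] using hf'.deriv.symm.trans hb₁⟩

end DivSubSq

theorem le_re_of_forall_le_re_ofReal_mul_I {g : ℂ → ℂ} {m M : ℝ}
    (hg : DiffContOnCl ℂ g {z | 0 < z.re}) (hM : ∀ z : ℂ, 0 < z.re → M ≤ (g z).re)
    (hm : ∀ y : ℝ, m ≤ (g (y * I)).re) {z : ℂ} (hz : 0 ≤ z.re) : m ≤ (g z).re := by
  have hnorm (w : ℂ) : ‖exp (-g w)‖ = Real.exp (-(g w).re) := by rw [norm_exp, neg_re]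
  have hbound : ∀ w : ℂ, 0 < w.re → ‖exp (-g w)‖ ≤ Real.exp (-M) := fun w hw => by
    rw [hnorm]; exact Real.exp_le_exp.2 (neg_le_neg (hM w hw))
  have := PhragmenLindelof.right_half_plane_of_bounded_on_real (f := fun w => exp (-g w))
    (C := Real.exp (-m)) (differentiable_exp.comp_diffContOnCl hg.neg)
    ⟨1, one_lt_two, 0, .of_bound (Real.exp (-M)) (Filter.eventually_inf_principal.2
      (.of_forall fun w hw => by simpa using hbound w hw))⟩
    (Filter.isBoundedUnder_of_eventually_le (a := Real.exp (-M))
      ((Filter.eventually_gt_atTop 0).mono fun x hx => hbound x (by simpa using hx)))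
    (fun y => by rw [hnorm]; exact Real.exp_le_exp.2 (neg_le_neg (hm y))) hz
  rw [hnorm, Real.exp_le_exp] at this
  linarith

theorem re_add_mul_mul_conj_ge (p l w : ℂ) (hw : ‖w‖ = 1) :
    (‖p‖ ^ 2 - ‖l‖ ^ 2) / 2 ≤ ((p + w * l) * conj p).re := by
  have hcross : -(‖l‖ * ‖p‖) ≤ (w * l * conj p).re := by
    have := neg_abs_le (w * l * conj p).re
    have := abs_re_le_norm (w * l * conj p)
    rw [norm_mul, norm_mul, hw, norm_conj, one_mul] at this
    linarith
  rw [add_mul, add_re, mul_conj, ofReal_re, normSq_eq_norm_sq]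
  nlinarith [sq_nonneg (‖p‖ - ‖l‖)]

theorem exp_neg_ofReal_mul_I (y : ℝ) : exp (-(y * I)) = Real.cos y - Real.sin y * I := by
  rw [← neg_mul, ← ofReal_neg, exp_mul_I, ← ofReal_cos, ← ofReal_sin, Real.cos_neg, Real.sin_neg]
  push_cast; ring

def quadPoly (A B : ℝ) (z : ℂ) : ℂ := z ^ 2 + A * z + B

noncomputable def quasiPoly (A B C E : ℝ) (z : ℂ) : ℂ := quadPoly A B z + exp (-z) * (C * z + E)

section QuasiPoly

variable (A B C E : ℝ)

theorem quadPoly_conj (z : ℂ) : quadPoly A B (conj z) = conj (quadPoly A B z) := by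
  simp [quadPoly]

theorem quasiPoly_conj (z : ℂ) : quasiPoly A B C E (conj z) = conj (quasiPoly A B C E z) := by
  simp [quasiPoly, quadPoly_conj, ← exp_conj]

theorem hasDerivAt_quasiPoly (z : ℂ) :
    HasDerivAt (quasiPoly A B C E) (2 * z + A + exp (-z) * (C - (C * z + E))) z := by
  have := (((hasDerivAt_pow 2 z).add ((hasDerivAt_id z).const_mul (A : ℂ))).add_const (B : ℂ)).add
    ((hasDerivAt_neg z).cexp.mul (((hasDerivAt_id z).const_mul (C : ℂ)).add_const (E : ℂ)))
  exact this.congr_deriv (by simp only [id]; push_cast; ring)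

theorem differentiable_quasiPoly : Differentiable ℂ (quasiPoly A B C E) :=
  fun z => (hasDerivAt_quasiPoly A B C E z).differentiableAt

theorem deriv_quasiPoly_conj (z : ℂ) :
    deriv (quasiPoly A B C E) (conj z) = conj (deriv (quasiPoly A B C E) z) := by
  have h : conj ∘ quasiPoly A B C E ∘ conj = quasiPoly A B C E := by
    ext w; simp [quasiPoly_conj]
  conv_lhs => rw [← h, deriv_conj_conj]
  simp

theorem quasiPoly_neg_ofReal_mul_I (y : ℝ) :
    quasiPoly A B C E (-(y * I)) = conj (quasiPoly A B C E (y * I)) := by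
  rw [← quasiPoly_conj]; simp

theorem deriv_quasiPoly_neg_ofReal_mul_I (y : ℝ) :
    deriv (quasiPoly A B C E) (-(y * I)) = conj (deriv (quasiPoly A B C E) (y * I)) := by
  rw [← deriv_quasiPoly_conj]; simp

theorem quasiPoly_ofReal_mul_I (y : ℝ) :
    quasiPoly A B C E (y * I) =
      ((B - y ^ 2 + E * Real.cos y + C * y * Real.sin y : ℝ) : ℂ)
        + ((A * y + C * y * Real.cos y - E * Real.sin y : ℝ) : ℂ) * I := by
  rw [quasiPoly, quadPoly, exp_neg_ofReal_mul_I]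
  generalize Real.cos y = c; generalize Real.sin y = s
  push_cast
  linear_combination ((y : ℂ) ^ 2 - s * C * y) * I_sq

theorem deriv_quasiPoly_ofReal_mul_I (y : ℝ) :
    deriv (quasiPoly A B C E) (y * I) =
      ((A + (C - E) * Real.cos y - C * y * Real.sin y : ℝ) : ℂ)
        + ((2 * y - C * y * Real.cos y - (C - E) * Real.sin y : ℝ) : ℂ) * I := by
  rw [(hasDerivAt_quasiPoly A B C E _).deriv, exp_neg_ofReal_mul_I]
  generalize Real.cos y = c; generalize Real.sin y = s
  push_cast
  linear_combination (s * C * y) * I_sq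

end QuasiPoly

/-- `G(z) = Q(z) P(-z) / (z² + ω²)²`, entire when `±iω` are double roots of `Q`. -/
noncomputable def quasiPolyRatio (A B C E ω : ℝ) (z : ℂ) : ℂ :=
  divSubSq (divSubSq (quasiPoly A B C E) (ω * I)) (-(ω * I)) z * quadPoly A B (-z)

section QuasiPolyRatio

variable {A B C E ω : ℝ}

theorem differentiable_quasiPolyRatio : Differentiable ℂ (quasiPolyRatio A B C E ω) :=
  ((differentiable_quasiPoly A B C E).divSubSq _).divSubSq _ |>.mul (by unfold quadPoly; fun_prop)

theorem sq_add_sq_sq_mul_quasiPolyRatio (hω : ω ≠ 0) (h₀ : quasiPoly A B C E (ω * I) = 0)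
    (h₁ : deriv (quasiPoly A B C E) (ω * I) = 0) (z : ℂ) :
    (z ^ 2 + ω ^ 2) ^ 2 * quasiPolyRatio A B C E ω z = quasiPoly A B C E z * quadPoly A B (-z) := by
  have hne : -((ω : ℂ) * I) ≠ ω * I := by
    simpa [neg_eq_iff_add_eq_zero, ← two_mul] using hω
  obtain ⟨k₀, k₁⟩ := divSubSq_eq_zero_and_deriv_eq_zero
    ((differentiable_quasiPoly A B C E) _) h₀ h₁
    (by rw [quasiPoly_neg_ofReal_mul_I, h₀, map_zero])
    (by rw [deriv_quasiPoly_neg_ofReal_mul_I, h₁, map_zero]) hne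
  have hfac : (z ^ 2 + ω ^ 2) ^ 2 = (z - ω * I) ^ 2 * (z - -(ω * I)) ^ 2 := by
    linear_combination ((ω : ℂ) ^ 2 * (2 * z ^ 2 + ω ^ 2 - ω ^ 2 * I ^ 2)) * I_sq
  rw [quasiPolyRatio, ← mul_assoc, hfac, mul_assoc ((z - _) ^ 2), sub_sq_mul_divSubSq k₀ k₁,
    sub_sq_mul_divSubSq h₀ h₁]

end QuasiPolyRatio

section Axis

variable {A B C E ω : ℝ}

theorem norm_quadPoly_sq_sub_norm_sq (y : ℝ) :
    ‖quadPoly A B (y * I)‖ ^ 2 - ‖C * (y * I) + E‖ ^ 2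
      = y ^ 4 + (A ^ 2 - C ^ 2 - 2 * B) * y ^ 2 + (B ^ 2 - E ^ 2) := by
  have hP : quadPoly A B (y * I) = ((B - y ^ 2 : ℝ) : ℂ) + ((A * y : ℝ) : ℂ) * I := by
    rw [quadPoly]; push_cast; linear_combination (y : ℂ) ^ 2 * I_sq
  have hL : (C : ℂ) * (y * I) + E = ((E : ℝ) : ℂ) + ((C * y : ℝ) : ℂ) * I := by push_cast; ring
  rw [hP, hL, Complex.sq_norm, Complex.sq_norm, normSq_add_mul_I, normSq_add_mul_I]
  ring

theorem half_sq_le_re_quasiPoly_mul_quadPoly (hAC : A ^ 2 - C ^ 2 - 2 * B = -2 * ω ^ 2)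
    (hBE : B ^ 2 - E ^ 2 = ω ^ 4) (y : ℝ) :
    (y ^ 2 - ω ^ 2) ^ 2 / 2 ≤ (quasiPoly A B C E (y * I) * quadPoly A B (-(y * I))).re := by
  have hw : ‖exp (-(y * I))‖ = 1 := by
    rw [← neg_mul, ← ofReal_neg, norm_exp_ofReal_mul_I]
  have := re_add_mul_mul_conj_ge (quadPoly A B (y * I)) (C * (y * I) + E) _ hw
  have hconj : conj ((y : ℂ) * I) = -(y * I) := by simp
  rw [norm_quadPoly_sq_sub_norm_sq, hAC, hBE, ← quadPoly_conj, hconj] at this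
  exact (by ring : (y ^ 2 - ω ^ 2) ^ 2 / 2 = _).trans_le this

theorem half_le_re_quasiPolyRatio_ofReal_mul_I (hω : ω ≠ 0) (h₀ : quasiPoly A B C E (ω * I) = 0)
    (h₁ : deriv (quasiPoly A B C E) (ω * I) = 0) (hAC : A ^ 2 - C ^ 2 - 2 * B = -2 * ω ^ 2)
    (hBE : B ^ 2 - E ^ 2 = ω ^ 4) (y : ℝ) :
    1 / 2 ≤ (quasiPolyRatio A B C E ω (y * I)).re := by
  have hoff : ∀ t ∈ ({ω, -ω} : Set ℝ)ᶜ, 1 / 2 ≤ (quasiPolyRatio A B C E ω (t * I)).re := by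
    intro t ht
    have hd : 0 < (t ^ 2 - ω ^ 2) ^ 2 := pow_two_pos_of_ne_zero <|
      sub_ne_zero.2 fun h => ht (by simpa using sq_eq_sq_iff_eq_or_eq_neg.1 h)
    have hden : ((t * I : ℂ) ^ 2 + ω ^ 2) ^ 2 = (((t ^ 2 - ω ^ 2) ^ 2 : ℝ) : ℂ) := by
      push_cast; linear_combination ((t : ℂ) ^ 2 * (t ^ 2 * I ^ 2 - t ^ 2 + 2 * ω ^ 2)) * I_sq
    have := congrArg re (sq_add_sq_sq_mul_quasiPolyRatio hω h₀ h₁ (t * I))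
    rw [hden, re_ofReal_mul] at this
    have hF := half_sq_le_re_quasiPoly_mul_quadPoly hAC hBE t
    rw [← this] at hF
    nlinarith
  have hcont : Continuous fun t : ℝ => (quasiPolyRatio A B C E ω (t * I)).re :=
    continuous_re.comp (differentiable_quasiPolyRatio.continuous.comp (by fun_prop))
  have hdense : Dense ({ω, -ω} : Set ℝ)ᶜ := (Set.toFinite _).countable.dense_compl ℝ
  exact (isClosed_le continuous_const hcont).closure_subset_iff.2 hoff
    (hdense.closure_eq ▸ Set.mem_univ y)

end Axis

section Bounds

variable {A B C E ω : ℝ}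

theorem norm_quadPoly_le (z : ℂ) : ‖quadPoly A B z‖ ≤ ‖z‖ ^ 2 + |A| * ‖z‖ + |B| := by
  refine (norm_add_le _ _).trans (add_le_add ((norm_add_le _ _).trans (le_of_eq ?_)) ?_)
  · rw [norm_pow, norm_mul, norm_real, Real.norm_eq_abs]
  · rw [norm_real, Real.norm_eq_abs]

theorem norm_quasiPoly_le {z : ℂ} (hz : 0 ≤ z.re) :
    ‖quasiPoly A B C E z‖ ≤ ‖z‖ ^ 2 + (|A| + |C|) * ‖z‖ + (|B| + |E|) := by
  have hexp : ‖exp (-z)‖ ≤ 1 := by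
    rw [norm_exp, Real.exp_le_one_iff, neg_re, neg_nonpos]; exact hz
  have hL : ‖(C : ℂ) * z + E‖ ≤ |C| * ‖z‖ + |E| := by
    refine (norm_add_le _ _).trans (le_of_eq ?_)
    rw [norm_mul, norm_real, norm_real, Real.norm_eq_abs, Real.norm_eq_abs]
  calc ‖quasiPoly A B C E z‖ ≤ ‖quadPoly A B z‖ + 1 * (|C| * ‖z‖ + |E|) := by
        refine (norm_add_le _ _).trans (add_le_add le_rfl ?_)
        rw [norm_mul]; gcongr
    _ ≤ _ := by nlinarith [norm_quadPoly_le (A := A) (B := B) z]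

theorem exists_norm_quasiPolyRatio_le (hω : ω ≠ 0) (h₀ : quasiPoly A B C E (ω * I) = 0)
    (h₁ : deriv (quasiPoly A B C E) (ω * I) = 0) :
    ∃ M, ∀ z : ℂ, 0 ≤ z.re → ‖quasiPolyRatio A B C E ω z‖ ≤ M := by
  have hA₀ := abs_nonneg A; have hB₀ := abs_nonneg B
  have hC₀ := abs_nonneg C; have hE₀ := abs_nonneg E
  set K := |A| + |B| + |C| + |E| + 1 with hK
  obtain ⟨M, hM⟩ := (isCompact_closedBall (0 : ℂ) (2 * K + 2 * |ω|)).exists_bound_of_continuousOn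
    differentiable_quasiPolyRatio.continuous.continuousOn
  refine ⟨max M 16, fun z hz => ?_⟩
  rcases le_or_gt ‖z‖ (2 * K + 2 * |ω|) with hzR | hzR
  · exact (hM z (mem_closedBall_zero_iff.2 hzR)).trans (le_max_left _ _)
  set r := ‖z‖
  have hr : 2 * K ≤ r ∧ 2 * |ω| ≤ r := by constructor <;> linarith [abs_nonneg ω]
  have hr₀ : 0 < r := by linarith
  have hquad {a b : ℝ} (ha : a ≤ K) (hb : b ≤ K) : r ^ 2 + a * r + b ≤ 2 * r ^ 2 := by
    nlinarith
  have hQ := (norm_quasiPoly_le (A := A) (B := B) (C := C) (E := E) hz).trans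
    (hquad (by linarith [hK]) (by linarith [hK]))
  have hP : ‖quadPoly A B (-z)‖ ≤ 2 * r ^ 2 := by
    have := norm_quadPoly_le (A := A) (B := B) (-z)
    rw [norm_neg] at this
    exact this.trans (hquad (by linarith [hK]) (by linarith [hK]))
  have hden : r ^ 2 / 2 ≤ ‖z ^ 2 + ω ^ 2‖ := by
    have := norm_sub_norm_le (z ^ 2) (-(ω ^ 2 : ℂ))
    rw [norm_neg, norm_pow, norm_pow, norm_real, Real.norm_eq_abs, sub_neg_eq_add] at this
    nlinarith [abs_nonneg ω]
  have hprod := congrArg norm (sq_add_sq_sq_mul_quasiPolyRatio hω h₀ h₁ z)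
  rw [norm_mul, norm_mul, norm_pow] at hprod
  have : (r ^ 2 / 2) ^ 2 * ‖quasiPolyRatio A B C E ω z‖ ≤ (r ^ 2 / 2) ^ 2 * 16 :=
    calc (r ^ 2 / 2) ^ 2 * ‖quasiPolyRatio A B C E ω z‖
        ≤ ‖z ^ 2 + ω ^ 2‖ ^ 2 * ‖quasiPolyRatio A B C E ω z‖ := by gcongr
      _ = ‖quasiPoly A B C E z‖ * ‖quadPoly A B (-z)‖ := hprod
      _ ≤ (2 * r ^ 2) * (2 * r ^ 2) := mul_le_mul hQ hP (norm_nonneg _) (by positivity)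
      _ = (r ^ 2 / 2) ^ 2 * 16 := by ring
  exact (le_of_mul_le_mul_left this (by positivity)).trans (le_max_right _ _)

end Bounds

theorem re_neg_of_quasiPoly_eq_zero {A B C E ω : ℝ} (hω : ω ≠ 0)
    (h₀ : quasiPoly A B C E (ω * I) = 0) (h₁ : deriv (quasiPoly A B C E) (ω * I) = 0)
    (hAC : A ^ 2 - C ^ 2 - 2 * B = -2 * ω ^ 2) (hBE : B ^ 2 - E ^ 2 = ω ^ 4) {z : ℂ}
    (hz₁ : z ≠ ω * I) (hz₂ : z ≠ -(ω * I)) (hz : quasiPoly A B C E z = 0) : z.re < 0 := by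
  by_contra! hre
  obtain ⟨M, hM⟩ := exists_norm_quasiPolyRatio_le hω h₀ h₁
  have hhalf := le_re_of_forall_le_re_ofReal_mul_I differentiable_quasiPolyRatio.diffContOnCl
    (fun w hw => neg_le_of_abs_le ((abs_re_le_norm _).trans (hM w hw.le)))
    (half_le_re_quasiPolyRatio_ofReal_mul_I hω h₀ h₁ hAC hBE) hre
  have hne : (z ^ 2 + ω ^ 2) ^ 2 ≠ 0 := by
    rw [show z ^ 2 + ω ^ 2 = (z - ω * I) * (z - -(ω * I)) by linear_combination (ω : ℂ) ^ 2 * I_sq]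
    exact pow_ne_zero 2 (mul_ne_zero (sub_ne_zero.2 hz₁) (sub_ne_zero.2 hz₂))
  have hG := sq_add_sq_sq_mul_quasiPolyRatio hω h₀ h₁ z
  rw [hz, zero_mul, mul_eq_zero, or_iff_right hne] at hG
  rw [hG, zero_re] at hhalf
  norm_num at hhalf

theorem quasiPoly_double_root_of_coeffs {ω A B C E D : ℝ} (hω : ω ≠ 0)
    (hD : D = ω ^ 2 - Real.sin ω ^ 2)
    (hA : A = -2 * ω * (ω - Real.sin ω * Real.cos ω) / D)
    (hB : B = ω ^ 2 * (ω ^ 2 + Real.sin ω ^ 2) / D)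
    (hC : C = 2 * ω * (ω * Real.cos ω - Real.sin ω) / D)
    (hE : E = -2 * ω ^ 3 * Real.sin ω / D) :
    (A ^ 2 - C ^ 2 - 2 * B = -2 * ω ^ 2 ∧ B ^ 2 - E ^ 2 = ω ^ 4) ∧
      quasiPoly A B C E (ω * I) = 0 ∧ deriv (quasiPoly A B C E) (ω * I) = 0 := by
  have hD₀ : ω ^ 2 - Real.sin ω ^ 2 ≠ 0 := (sub_pos.2 (Real.sin_sq_lt_sq hω)).ne'
  have hp := Real.sin_sq_add_cos_sq ω
  rw [quasiPoly_ofReal_mul_I, deriv_quasiPoly_ofReal_mul_I, Complex.ext_iff, Complex.ext_iff]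
  simp only [add_re, add_im, ofReal_re, ofReal_im, mul_re, mul_im, I_re, I_im, zero_re, zero_im]
  subst hD hA hB hC hE
  refine ⟨⟨?_, ?_⟩, ⟨?_, ?_⟩, ?_, ?_⟩ <;> field_simp
  · linear_combination (2 * Real.sin ω ^ 2 - 2 * ω ^ 2) * hp
  · ring
  · ring
  · linear_combination (2 * ω ^ 3) * hp
  · linear_combination (2 * ω ^ 2) * hp
  · linear_combination (-2 * ω ^ 3) * hp

theorem delayQuasiPoly_eq_zero_iff {τ : ℝ} (hτ : τ ≠ 0) (σ₀ a₁ a₀ α₁ α₀ : ℝ) (s : ℂ) :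
    s ^ 2 + a₁ * s + a₀ + exp (-s * τ) * (α₁ * s + α₀) = 0 ↔
      quasiPoly (τ * (a₁ + 2 * σ₀)) (τ ^ 2 * (σ₀ ^ 2 + a₁ * σ₀ + a₀))
        (τ * α₁ * Real.exp (-(σ₀ * τ))) (τ ^ 2 * (σ₀ * α₁ + α₀) * Real.exp (-(σ₀ * τ)))
        (τ * (s - σ₀)) = 0 := by
  have hexp : exp (σ₀ * τ) * exp (-(σ₀ * τ)) = 1 := by rw [← exp_add]; simp
  have hscale : quasiPoly (τ * (a₁ + 2 * σ₀)) (τ ^ 2 * (σ₀ ^ 2 + a₁ * σ₀ + a₀))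
      (τ * α₁ * Real.exp (-(σ₀ * τ))) (τ ^ 2 * (σ₀ * α₁ + α₀) * Real.exp (-(σ₀ * τ)))
      (τ * (s - σ₀)) = τ ^ 2 * (s ^ 2 + a₁ * s + a₀ + exp (-s * τ) * (α₁ * s + α₀)) := by
    rw [quasiPoly, quadPoly, show -(τ * (s - σ₀)) = -s * τ + σ₀ * τ by ring, exp_add]
    push_cast
    linear_combination (τ : ℂ) ^ 2 * exp (-s * τ) * (α₁ * s + α₀) * hexp
  rw [hscale, mul_eq_zero, or_iff_right (pow_ne_zero 2 (ofReal_ne_zero.2 hτ))]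

/-- If the coefficients of Δ are chosen so that s₀ = σ₀ + iθ₀ (θ₀ ≠ 0) and
its conjugate are roots of multiplicity 2, then s₀ and conj s₀ form a pair of strictly
dominant roots of Δ. -/
theorem complex_pair_strictly_dominant
    (τ σ₀ θ₀ a₁ a₀ α₁ α₀ D : ℝ) (hτ : 0 < τ) (hθ₀ : θ₀ ≠ 0)
    (s₀ : ℂ) (hs₀ : s₀ = σ₀ + θ₀ * Complex.I)
    (hD : D = τ ^ 2 * θ₀ ^ 2 - Real.sin (τ * θ₀) ^ 2)
    (ha₁ : a₁ = -2 * σ₀ - 2 * θ₀ * (τ * θ₀ - Real.sin (τ * θ₀) * Real.cos (τ * θ₀)) / D)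
    (ha₀ : a₀ = σ₀ ^ 2 + 2 * σ₀ * θ₀ * (τ * θ₀ - Real.sin (τ * θ₀) * Real.cos (τ * θ₀)) / D
            + θ₀ ^ 2 * (τ ^ 2 * θ₀ ^ 2 + Real.sin (τ * θ₀) ^ 2) / D)
    (hα₁ : α₁ = 2 * θ₀ * Real.exp (σ₀ * τ) *
            (τ * θ₀ * Real.cos (τ * θ₀) - Real.sin (τ * θ₀)) / D)
    (hα₀ : α₀ = 2 * θ₀ * Real.exp (σ₀ * τ) *
            (σ₀ * (Real.sin (τ * θ₀) - τ * θ₀ * Real.cos (τ * θ₀))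
              - τ * θ₀ ^ 2 * Real.sin (τ * θ₀)) / D)
    (Δ : ℂ → ℂ)
    (hΔ : ∀ s : ℂ, Δ s = s ^ 2 + a₁ * s + a₀ + Complex.exp (-s * τ) * (α₁ * s + α₀)) :
    Δ s₀ = 0 ∧ Δ (conj s₀) = 0 ∧
      ∀ s : ℂ, s ≠ s₀ → s ≠ conj s₀ → Δ s = 0 → s.re < σ₀ := by
  set ω := τ * θ₀
  have hexp : Real.exp (σ₀ * τ) * Real.exp (-(σ₀ * τ)) = 1 := by rw [← Real.exp_add]; simp
  obtain ⟨⟨hAC, hBE⟩, h₀, h₁⟩ := quasiPoly_double_root_of_coeffs (ω := ω) (D := D)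
    (A := τ * (a₁ + 2 * σ₀)) (B := τ ^ 2 * (σ₀ ^ 2 + a₁ * σ₀ + a₀))
    (C := τ * α₁ * Real.exp (-(σ₀ * τ))) (E := τ ^ 2 * (σ₀ * α₁ + α₀) * Real.exp (-(σ₀ * τ)))
    (mul_ne_zero hτ.ne' hθ₀)
    (by rw [hD]; ring) (by rw [ha₁]; ring) (by rw [ha₁, ha₀]; ring)
    (by rw [hα₁]; linear_combination (2 * ω * (ω * Real.cos ω - Real.sin ω) / D) * hexp)
    (by rw [hα₁, hα₀]; linear_combination (-2 * ω ^ 3 * Real.sin ω / D) * hexp)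
  simp only [hΔ, delayQuasiPoly_eq_zero_iff hτ.ne' σ₀]
  have hs₀' : τ * (s₀ - σ₀) = ω * I := by rw [hs₀]; push_cast [ω]; ring
  have hs₀conj : τ * (conj s₀ - σ₀) = -(ω * I) := by
    rw [hs₀, map_add, map_mul, conj_ofReal, conj_ofReal, conj_I]; push_cast [ω]; ring
  refine ⟨hs₀' ▸ h₀, by rw [hs₀conj, quasiPoly_neg_ofReal_mul_I, h₀, map_zero],
    fun s hs₁ hs₂ hs => ?_⟩
  have := re_neg_of_quasiPoly_eq_zero (mul_ne_zero hτ.ne' hθ₀) h₀ h₁ hAC hBE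
    (hs₀' ▸ fun h => hs₁ (by simpa [hτ.ne'] using h))
    (hs₀conj ▸ fun h => hs₂ (by simpa [hτ.ne'] using h)) hs
  rw [re_ofReal_mul, sub_re, ofReal_re] at this
  exact sub_neg.1 (neg_of_mul_neg_right this hτ.le)
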